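/- Let $\hat{X}$ be a function of $X$, let $X - U' - U$ be a Markov chain of finitely supported random variables, and suppose $\hat{X}$ is independent of $U$. Then $I(X;U) \leq I(X;U') - I(\hat{X};U')$. -/

import Mathlib

open Finset

/-- Shannon entropy (base 2) of a pmf on a finite alphabet. -/
noncomputable def ent {α : Type*} [Fintype α] (p : α → ℝ) : ℝ :=
  ∑ a, -(p a * Real.logb 2 (p a))

/-- Mutual information (base 2) of a joint pmf on a product of finite alphabets. -/
noncomputable def mi {α β : Type*} [Fintype α] [Fintype β] (q : α × β → ℝ) : ℝ :=
  ent (fun a => ∑ b, q (a, b)) + ent (fun b => ∑ a, q (a, b)) - ent q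

/-!
Expanding the three mutual informations, `I(X;U') - I(X̂;U') - I(X;U)` is the expectation of
`log r` with `r = P(x,u') P(x̂) P(u) / (P(x̂,u') P(x,u))`. By Gibbs' inequality this is nonnegative
as soon as `E[1/r] ≤ 1`. In `E[1/r]` the Markov property bounds `P(x,u',u) / P(x,u')` by
`P(u',u) / P(u')`; summing over `x` within each fibre of `g` then produces
`P(x̂,u) = P(x̂) P(u)` by independence, and what remains is at most `∑ P(u',u) = 1`.
-/

lemma mi_eq_sum {α β : Type*} [Fintype α] [Fintype β] (q : α × β → ℝ) :
    mi q = ∑ a, ∑ b, q (a, b) *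
      (Real.logb 2 (q (a, b)) - Real.logb 2 (∑ b', q (a, b'))
        - Real.logb 2 (∑ a', q (a', b))) := by
  have hA : ent (fun a => ∑ b, q (a, b))
      = ∑ a, ∑ b, -(q (a, b) * Real.logb 2 (∑ b', q (a, b'))) := by
    simp only [ent, sum_neg_distrib, sum_mul]
  have hB : ent (fun b => ∑ a, q (a, b))
      = ∑ a, ∑ b, -(q (a, b) * Real.logb 2 (∑ a', q (a', b))) := by
    rw [sum_comm]
    simp only [ent, sum_neg_distrib, sum_mul]
  have hAB : ent q = ∑ a, ∑ b, -(q (a, b) * Real.logb 2 (q (a, b))) := by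
    rw [ent, Fintype.sum_prod_type]
  rw [mi, hA, hB, hAB, ← sum_add_distrib, ← sum_sub_distrib]
  refine sum_congr rfl fun a _ => ?_
  rw [← sum_add_distrib, ← sum_sub_distrib]
  exact sum_congr rfl fun b _ => by ring

/-- Gibbs' inequality, for a sub-probability vector `p / r`. -/
lemma sum_mul_logb_nonneg {ι : Type*} [Fintype ι] {p r : ι → ℝ} (hp : ∀ i, 0 ≤ p i)
    (hp1 : ∑ i, p i = 1) (hr : ∀ i, 0 < p i → 0 < r i) (hpr : ∑ i, p i / r i ≤ 1) :
    0 ≤ ∑ i, p i * Real.logb 2 (r i) := by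
  have hterm : ∀ i, p i - p i / r i ≤ p i * Real.log (r i) := fun i => by
    rcases (hp i).eq_or_lt with h | h
    · simp [← h]
    · have := mul_le_mul_of_nonneg_left (Real.one_sub_inv_le_log_of_pos (hr i h)) h.le
      rwa [mul_sub, mul_one, ← div_eq_mul_inv] at this
  have hlog : 0 ≤ ∑ i, p i * Real.log (r i) := by
    have := sum_le_sum fun i (_ : i ∈ univ) => hterm i
    rw [sum_sub_distrib, hp1] at this
    linarith
  simp only [Real.logb, ← mul_div_assoc, ← sum_div]
  exact div_nonneg hlog (Real.log_nonneg one_le_two)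

lemma sum_mul_comp_eq_sum_fiber_mul {ι κ R : Type*} [Fintype κ] [DecidableEq κ]
    [NonUnitalNonAssocSemiring R] (s : Finset ι) (g : ι → κ) (a : ι → R) (φ : κ → R) :
    ∑ i ∈ s, a i * φ (g i) = ∑ k, (∑ i ∈ s with g i = k, a i) * φ k := by
  rw [← sum_fiberwise s g]
  refine sum_congr rfl fun k _ => ?_
  rw [sum_mul]
  exact sum_congr rfl fun i hi => by rw [(mem_filter.1 hi).2]

section Marginals

variable {α γ' γ δ : Type*} [Fintype α] [Fintype γ'] [Fintype γ] [DecidableEq δ]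
  (p : α × γ' × γ → ℝ) (g : α → δ)

noncomputable def pX (x : α) : ℝ := ∑ u', ∑ u, p (x, u', u)
noncomputable def pU' (u' : γ') : ℝ := ∑ x, ∑ u, p (x, u', u)
noncomputable def pU (u : γ) : ℝ := ∑ x, ∑ u', p (x, u', u)
noncomputable def pXU' (x : α) (u' : γ') : ℝ := ∑ u, p (x, u', u)
noncomputable def pXU (x : α) (u : γ) : ℝ := ∑ u', p (x, u', u)
noncomputable def pU'U (u' : γ') (u : γ) : ℝ := ∑ x, p (x, u', u)
noncomputable def pXhat (d : δ) : ℝ := ∑ x ∈ univ.filter (fun x => g x = d), pX p x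
noncomputable def pXhatU' (d : δ) (u' : γ') : ℝ :=
  ∑ x ∈ univ.filter (fun x => g x = d), pXU' p x u'

lemma mi_XU'_eq :
    mi (fun w : α × γ' => ∑ v, p (w.1, w.2, v))
      = ∑ w, p w * (Real.logb 2 (pXU' p w.1 w.2.1) - Real.logb 2 (pX p w.1)
          - Real.logb 2 (pU' p w.2.1)) := by
  simp only [mi_eq_sum, Fintype.sum_prod_type, sum_mul]
  rfl

lemma mi_XU_eq :
    mi (fun w : α × γ => ∑ u', p (w.1, u', w.2))
      = ∑ w, p w * (Real.logb 2 (pXU p w.1 w.2.2) - Real.logb 2 (pX p w.1)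
          - Real.logb 2 (pU p w.2.2)) := by
  simp only [mi_eq_sum, Fintype.sum_prod_type, sum_mul]
  refine sum_congr rfl fun x _ => ?_
  rw [show ∑ u, ∑ u', p (x, u', u) = pX p x from sum_comm, sum_comm]
  rfl

lemma mi_XhatU'_eq [Fintype δ] :
    mi (fun w : δ × γ' => ∑ x ∈ univ.filter (fun x => g x = w.1), ∑ v, p (x, w.2, v))
      = ∑ w, p w * (Real.logb 2 (pXhatU' p g (g w.1) w.2.1) - Real.logb 2 (pXhat p g (g w.1))
          - Real.logb 2 (pU' p w.2.1)) := by
  have hXhat : ∀ d, ∑ u', ∑ x ∈ univ.filter (fun x => g x = d), ∑ v, p (x, u', v)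
      = pXhat p g d := fun d => sum_comm
  have hU' : ∀ u', ∑ d, ∑ x ∈ univ.filter (fun x => g x = d), ∑ v, p (x, u', v)
      = pU' p u' := fun u' => sum_fiberwise _ _ (fun x => ∑ v, p (x, u', v))
  rw [mi_eq_sum, sum_comm]
  simp only [hXhat, hU', Fintype.sum_prod_type, ← sum_mul]
  conv_rhs => rw [sum_comm]
  refine sum_congr rfl fun u' _ => ?_
  rw [sum_mul_comp_eq_sum_fiber_mul univ g _ (fun d => Real.logb 2 (pXhatU' p g d u')
    - Real.logb 2 (pXhat p g d) - Real.logb 2 (pU' p u'))]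
  rfl

lemma marginals_pos (hnn : ∀ w, 0 ≤ p w) {x : α} {u' : γ'} {u : γ} (hpos : 0 < p (x, u', u)) :
    0 < pXU' p x u' ∧ 0 < pXU p x u ∧ 0 < pU p u ∧ 0 < pXhat p g (g x)
      ∧ 0 < pXhatU' p g (g x) u' := by
  have hx : x ∈ univ.filter (fun x' => g x' = g x) := by simp
  have hXU' : p (x, u', u) ≤ pXU' p x u' :=
    single_le_sum (fun v _ => hnn (x, u', v)) (mem_univ u)
  have hXU : p (x, u', u) ≤ pXU p x u :=
    single_le_sum (fun v _ => hnn (x, v, u)) (mem_univ u')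
  have hU : pXU p x u ≤ pU p u :=
    single_le_sum (fun x' _ => sum_nonneg fun v _ => hnn (x', v, u)) (mem_univ x)
  have hX : pXU' p x u' ≤ pX p x :=
    single_le_sum (fun v _ => sum_nonneg fun w _ => hnn (x, v, w)) (mem_univ u')
  have hXhat : pX p x ≤ pXhat p g (g x) :=
    single_le_sum (fun x' _ => sum_nonneg fun v _ => sum_nonneg fun w _ => hnn (x', v, w)) hx
  have hXhatU' : pXU' p x u' ≤ pXhatU' p g (g x) u' :=
    single_le_sum (fun x' _ => sum_nonneg fun w _ => hnn (x', u', w)) hx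
  refine ⟨?_, ?_, ?_, ?_, ?_⟩ <;> linarith

/-- The pointwise value of `I(X;U') - I(X̂;U') - I(X;U)` is `log (gapRatio p g w)`. -/
noncomputable def gapRatio (w : α × γ' × γ) : ℝ :=
  pXU' p w.1 w.2.1 * pXhat p g (g w.1) * pU p w.2.2
    / (pXhatU' p g (g w.1) w.2.1 * pXU p w.1 w.2.2)

lemma gapRatio_pos (hnn : ∀ w, 0 ≤ p w) (w : α × γ' × γ) (hw : 0 < p w) :
    0 < gapRatio p g w := by
  obtain ⟨h1, h2, h3, h4, h5⟩ := marginals_pos p g hnn hw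
  unfold gapRatio
  positivity

lemma mi_sub_mi_sub_mi_eq [Fintype δ] (hnn : ∀ w, 0 ≤ p w) :
    mi (fun w : α × γ' => ∑ v, p (w.1, w.2, v))
        - mi (fun w : δ × γ' => ∑ x ∈ univ.filter (fun x => g x = w.1), ∑ v, p (x, w.2, v))
        - mi (fun w : α × γ => ∑ u', p (w.1, u', w.2))
      = ∑ w, p w * Real.logb 2 (gapRatio p g w) := by
  rw [mi_XU'_eq, mi_XhatU'_eq, mi_XU_eq, ← sum_sub_distrib, ← sum_sub_distrib]
  refine sum_congr rfl fun w _ => ?_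
  rcases (hnn w).eq_or_lt with h | h
  · simp [← h]
  obtain ⟨h1, h2, h3, h4, h5⟩ := marginals_pos p g hnn h
  rw [gapRatio, Real.logb_div (by positivity) (by positivity), Real.logb_mul (by positivity)
    (by positivity), Real.logb_mul (by positivity) (by positivity),
    Real.logb_mul (by positivity) (by positivity)]
  ring

omit [Fintype γ'] in
lemma div_pXU'_le_of_markov (hnn : ∀ w, 0 ≤ p w)
    (hmarkov : ∀ x u' u, 0 < pU' p u' → p (x, u', u) * pU' p u' = pXU' p x u' * pU'U p u' u)
    (x : α) (u' : γ') (u : γ) :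
    p (x, u', u) / pXU' p x u' ≤ pU'U p u' u / pU' p u' := by
  have hXU' : p (x, u', u) ≤ pXU' p x u' :=
    single_le_sum (fun v _ => hnn (x, u', v)) (mem_univ u)
  have hU' : pXU' p x u' ≤ pU' p u' :=
    single_le_sum (fun x' _ => sum_nonneg fun v _ => hnn (x', u', v)) (mem_univ x)
  rcases (hnn (x, u', u)).trans (hXU'.trans hU') |>.eq_or_lt with hU'0 | hU'pos
  · have hp0 : p (x, u', u) = 0 := le_antisymm (by linarith) (hnn _)
    simp [hp0, ← hU'0]
  rcases ((hnn (x, u', u)).trans hXU').eq_or_lt with hXU'0 | hXU'pos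
  · rw [← hXU'0, div_zero]
    exact div_nonneg (sum_nonneg fun x' _ => hnn (x', u', u)) hU'pos.le
  rw [div_le_div_iff₀ hXU'pos hU'pos, hmarkov x u' u hU'pos, mul_comm]

lemma sum_fibers_le_pU'U [Fintype δ] (hnn : ∀ w, 0 ≤ p w)
    (hindep : ∀ d u, ∑ x ∈ univ.filter (fun x => g x = d), pXU p x u = pXhat p g d * pU p u)
    (u' : γ') (u : γ) :
    ∑ x, pU'U p u' u / pU' p u'
        * (pXhatU' p g (g x) u' * pXU p x u / (pXhat p g (g x) * pU p u))
      ≤ pU'U p u' u := by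
  set c := pU'U p u' u / pU' p u'
  have hU'U : 0 ≤ pU'U p u' u := sum_nonneg fun x _ => hnn (x, u', u)
  have hc : 0 ≤ c := div_nonneg hU'U (sum_nonneg fun x _ => sum_nonneg fun v _ => hnn (x, u', v))
  calc ∑ x, c * (pXhatU' p g (g x) u' * pXU p x u / (pXhat p g (g x) * pU p u))
      = ∑ x, pXU p x u * (c * pXhatU' p g (g x) u' / (pXhat p g (g x) * pU p u)) :=
        sum_congr rfl fun x _ => by ring
    _ = ∑ d, pXhat p g d * pU p u * (c * pXhatU' p g d u' / (pXhat p g d * pU p u)) := by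
        rw [sum_mul_comp_eq_sum_fiber_mul univ g _
          (fun d => c * pXhatU' p g d u' / (pXhat p g d * pU p u))]
        simp only [hindep]
    _ = ∑ d, c * pXhatU' p g d u' * (pXhat p g d * pU p u / (pXhat p g d * pU p u)) :=
        sum_congr rfl fun d _ => by ring
    _ ≤ ∑ d, c * pXhatU' p g d u' :=
        sum_le_sum fun d _ => mul_le_of_le_one_right
          (mul_nonneg hc (sum_nonneg fun x _ => sum_nonneg fun v _ => hnn (x, u', v)))
          (div_self_le_one _)
    _ = c * pU' p u' := by
        rw [← mul_sum]
        exact congrArg _ (sum_fiberwise _ _ _)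
    _ ≤ pU'U p u' u := by
        rcases eq_or_ne (pU' p u') 0 with h | h
        · simpa [h] using hU'U
        · exact (div_mul_cancel₀ _ h).le

lemma sum_div_gapRatio_le_one [Fintype δ] (hnn : ∀ w, 0 ≤ p w) (hsum : ∑ w, p w = 1)
    (hmarkov : ∀ x u' u, 0 < pU' p u' → p (x, u', u) * pU' p u' = pXU' p x u' * pU'U p u' u)
    (hindep : ∀ d u, ∑ x ∈ univ.filter (fun x => g x = d), pXU p x u = pXhat p g d * pU p u) :
    ∑ w, p w / gapRatio p g w ≤ 1 := by
  have hsplit : ∀ w, p w / gapRatio p g w = p w / pXU' p w.1 w.2.1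
      * (pXhatU' p g (g w.1) w.2.1 * pXU p w.1 w.2.2 / (pXhat p g (g w.1) * pU p w.2.2)) :=
    fun w => by rw [gapRatio, div_div_eq_mul_div]; ring
  calc ∑ w, p w / gapRatio p g w
      ≤ ∑ w : α × γ' × γ, pU'U p w.2.1 w.2.2 / pU' p w.2.1
          * (pXhatU' p g (g w.1) w.2.1 * pXU p w.1 w.2.2 / (pXhat p g (g w.1) * pU p w.2.2)) := by
        refine sum_le_sum fun w _ => ?_
        rw [hsplit]
        refine mul_le_mul_of_nonneg_right (div_pXU'_le_of_markov p hnn hmarkov _ _ _) ?_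
        exact div_nonneg
          (mul_nonneg (sum_nonneg fun _ _ => sum_nonneg fun _ _ => hnn _)
            (sum_nonneg fun _ _ => hnn _))
          (mul_nonneg (sum_nonneg fun _ _ => sum_nonneg fun _ _ => sum_nonneg fun _ _ => hnn _)
            (sum_nonneg fun _ _ => sum_nonneg fun _ _ => hnn _))
    _ = ∑ u', ∑ u, ∑ x, pU'U p u' u / pU' p u'
          * (pXhatU' p g (g x) u' * pXU p x u / (pXhat p g (g x) * pU p u)) := by
        simp only [Fintype.sum_prod_type]
        rw [sum_comm]
        exact sum_congr rfl fun u' _ => sum_comm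
    _ ≤ ∑ u', ∑ u, pU'U p u' u :=
        sum_le_sum fun u' _ => sum_le_sum fun u _ => sum_fibers_le_pU'U p g hnn hindep u' u
    _ = 1 := by
        rw [← hsum]
        simp only [pU'U, Fintype.sum_prod_type]
        exact (sum_congr rfl fun u' _ => sum_comm).trans sum_comm

end Marginals

/-- If `X̂ = g(X)`, `X - U' - U` is a Markov chain, and `X̂ ⟂ U`, then
`I(X;U) ≤ I(X;U') - I(X̂;U')`. -/
theorem stmt12 {α γ' γ δ : Type*} [Fintype α] [Fintype γ'] [Fintype γ] [Fintype δ]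
    [DecidableEq δ]
    (p : α × γ' × γ → ℝ) (hnn : ∀ w, 0 ≤ p w) (hsum : ∑ w, p w = 1)
    (g : α → δ)
    (hmarkov : ∀ (x : α) (u' : γ') (u : γ),
      0 < ∑ x', ∑ v, p (x', u', v) →
      p (x, u', u) * (∑ x', ∑ v, p (x', u', v))
        = (∑ v, p (x, u', v)) * (∑ x', p (x', u', u)))
    (hindep : ∀ (d : δ) (u : γ),
      (∑ x ∈ Finset.univ.filter (fun x => g x = d), ∑ u', p (x, u', u))
        = (∑ x ∈ Finset.univ.filter (fun x => g x = d), ∑ u', ∑ v, p (x, u', v))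
            * (∑ x, ∑ u', p (x, u', u))) :
    mi (fun w : α × γ => ∑ u', p (w.1, u', w.2))
      ≤ mi (fun w : α × γ' => ∑ v, p (w.1, w.2, v))
        - mi (fun w : δ × γ' =>
            ∑ x ∈ Finset.univ.filter (fun x => g x = w.1), ∑ v, p (x, w.2, v)) := by
  have hgap := mi_sub_mi_sub_mi_eq p g hnn
  have hgibbs := sum_mul_logb_nonneg hnn hsum (gapRatio_pos p g hnn)
    (sum_div_gapRatio_le_one p g hnn hsum hmarkov hindep)
  linarith
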